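/- Let b ∈ ℝ^n with b_j > 0 for all j and let φ : ℝ^n → ℝ^n be given by φ(y)_j = b_j y_j. A family x^1, …, x^k ∈ ℝ^n is pseudo-shattered by weighted-ℓ1 balls (with norm ‖·‖_{b,1}) if and only if the family φ(x^1), …, φ(x^k) is ℓ1-pseudo-shattered (with the same witness radii r_1, …, r_k). Consequently, any family x^1, …, x^k ∈ ℝ^n pseudo-shattered by weighted-ℓ1 balls satisfies 2^k ≤ (k+1)^n · Σ_{i=0}^{n} binom(k, i). -/

import Mathlib

/-!
Scaling coordinate `j` by `b j` is an additive bijection carrying `‖·‖_{b,1}` to `‖·‖₁`, which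
gives the equivalence. For the bound, the `k` values `x i j` cut the `j`-th axis into at most
`k + 1` pieces, so `ℝⁿ` splits into at most `(k + 1)ⁿ` boxes on each of which every
`y ↦ ‖y - xⁱ‖_{b,1}` is affine. The shattering witnesses lying in one box therefore realise
sign patterns of `k` affine functions on `ℝⁿ`. Such a family has VC dimension at most `n`: a
linear relation `∑ gᵢ fᵢ = 0` is incompatible with realising both `{g > 0}` and its complement.
Sauer–Shelah then bounds the number of patterns per box by `∑_{i ≤ n} C(k, i)`.
-/

open Finset Module

section Halfspaces

variable {𝕜 E ι : Type*} [Field 𝕜] [LinearOrder 𝕜] [IsStrictOrderedRing 𝕜]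
  [AddCommGroup E] [Module 𝕜 E] [FiniteDimensional 𝕜 E]

lemma mul_sub_pos_of_le_iff {g a₁ a₂ c : 𝕜} (h₁ : a₁ ≤ c ↔ 0 < g) (h₂ : a₂ ≤ c ↔ ¬ 0 < g)
    (hg : g ≠ 0) : 0 < g * (a₂ - a₁) := by
  rcases hg.lt_or_gt with hneg | hpos
  · have : a₂ < a₁ := (h₂.2 hneg.not_gt).trans_lt (not_le.1 fun h => hneg.not_gt (h₁.1 h))
    exact mul_pos_of_neg_of_neg hneg (sub_neg.2 this)
  · have : a₁ < a₂ := (h₁.2 hpos).trans_lt (not_le.1 fun h => h₂.1 h hpos)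
    exact mul_pos hpos (sub_pos.2 this)

variable [DecidableEq ι] {f : ι → Dual 𝕜 E} {c : ι → 𝕜} {𝒜 : Finset (Finset ι)}

lemma Finset.Shatters.card_le_finrank_of_halfspaces
    (h𝒜 : ∀ S ∈ 𝒜, ∃ y, ∀ i, f i y ≤ c i ↔ i ∈ S) {T : Finset ι} (hT : 𝒜.Shatters T) :
    #T ≤ finrank 𝕜 E := by
  by_contra! hcard
  have hdep : ¬ LinearIndepOn 𝕜 f (T : Set ι) := fun hli => by
    simpa [Subspace.dual_finrank_eq, hcard.not_ge] using hli.fintype_card_le_finrank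
  obtain ⟨g, hg, i₀, hi₀, hgi₀⟩ := not_linearIndepOn_finset_iff.1 hdep
  have realize : ∀ p : ι → Prop, [DecidablePred p] →
      ∃ y, ∀ i ∈ T, f i y ≤ c i ↔ p i := fun p _ => by
    obtain ⟨u, hu, hTu⟩ := hT (filter_subset p T)
    obtain ⟨y, hy⟩ := h𝒜 u hu
    refine ⟨y, fun i hi => (hy i).trans ?_⟩
    simpa [hi] using congrArg (i ∈ ·) hTu
  obtain ⟨y₁, hy₁⟩ := realize (0 < g ·)
  obtain ⟨y₂, hy₂⟩ := realize (¬ 0 < g ·)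
  have hterm : ∀ i ∈ T, g i ≠ 0 → 0 < g i * (f i y₂ - f i y₁) := fun i hi =>
    mul_sub_pos_of_le_iff (hy₁ i hi) (hy₂ i hi)
  have hsum : ∑ i ∈ T, g i * (f i y₂ - f i y₁) = 0 := by
    simpa [← map_sub, LinearMap.sum_apply] using congrArg (· (y₂ - y₁)) hg
  refine hsum.not_gt (sum_pos' (fun i hi => ?_) ⟨i₀, hi₀, hterm i₀ hi₀ hgi₀⟩)
  by_cases hgi : g i = 0
  · simp [hgi]
  · exact (hterm i hi hgi).le

lemma Finset.card_le_sum_choose_finrank_of_halfspaces [Fintype ι]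
    (h𝒜 : ∀ S ∈ 𝒜, ∃ y, ∀ i, f i y ≤ c i ↔ i ∈ S) :
    #𝒜 ≤ ∑ d ∈ range (finrank 𝕜 E + 1), (Fintype.card ι).choose d := by
  have hvc : 𝒜.vcDim ≤ finrank 𝕜 E :=
    Finset.sup_le fun T hT => (mem_shatterer.1 hT).card_le_finrank_of_halfspaces h𝒜
  calc #𝒜 ≤ #𝒜.shatterer := card_le_card_shatterer 𝒜
    _ ≤ ∑ d ∈ Iic 𝒜.vcDim, (Fintype.card ι).choose d := card_shatterer_le_sum_vcDim
    _ ≤ ∑ d ∈ range (finrank 𝕜 E + 1), (Fintype.card ι).choose d := by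
      rw [Nat.range_succ_eq_Iic]
      exact sum_le_sum_of_subset (Iic_subset_Iic.2 hvc)

end Halfspaces

lemma Finset.filter_le_eq_of_card_eq {ι α : Type*} [LinearOrder α] {s : Finset ι} {g : ι → α}
    {t t' : α} (h : #(s.filter (g · ≤ t)) = #(s.filter (g · ≤ t'))) :
    s.filter (g · ≤ t) = s.filter (g · ≤ t') := by
  rcases le_total t t' with htt' | ht't
  · exact eq_of_subset_of_card_le (monotone_filter_right s fun _ _ h => h.trans htt') h.ge
  · exact (eq_of_subset_of_card_le (monotone_filter_right s fun _ _ h => h.trans ht't) h.le).symm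

lemma mul_abs_sub_eq_of_le_iff {α : Type*} [Ring α] [LinearOrder α] [IsOrderedRing α]
    (b : α) {x y y₀ : α} (h : x ≤ y ↔ x ≤ y₀) :
    b * |y - x| = (if x ≤ y₀ then b else -b) * (y - x) := by
  split_ifs with hx
  · rw [abs_of_nonneg (sub_nonneg.2 (h.2 hx))]
  · rw [abs_of_neg (sub_neg.2 (not_le.1 (mt h.1 hx))), neg_mul, mul_neg]

def PseudoShatters {E ι : Type*} [Sub E] (N : E → ℝ) (x : ι → E) (r : ι → ℝ) : Prop :=
  ∀ S : Finset ι, ∃ y, ∀ i, N (y - x i) ≤ r i ↔ i ∈ S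

lemma pseudoShatters_congr {E F ι : Type*} [AddGroup E] [AddGroup F] {N₁ : E → ℝ} {N₂ : F → ℝ}
    (e : E ≃+ F) (hN : ∀ z, N₂ (e z) = N₁ z) (x : ι → E) (r : ι → ℝ) :
    PseudoShatters N₁ x r ↔ PseudoShatters N₂ (e ∘ x) r := by
  refine forall_congr' fun S => ?_
  rw [e.surjective.exists]
  simp only [Function.comp_apply, ← map_sub, hN]

section WeightedL1

variable {ι σ : Type*} [Fintype ι]

noncomputable def cellIndex (x : ι → σ → ℝ) (y : σ → ℝ) : σ → Fin (Fintype.card ι + 1) :=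
  fun j => ⟨#{i | x i j ≤ y j}, Nat.lt_succ_of_le (card_le_univ _)⟩

lemma le_iff_le_of_cellIndex_eq {x : ι → σ → ℝ} {y y' : σ → ℝ}
    (h : cellIndex x y = cellIndex x y') (i : ι) (j : σ) : x i j ≤ y j ↔ x i j ≤ y' j := by
  classical
  have hcard := congrArg Fin.val (congrFun h j)
  simpa using congrArg (i ∈ ·) (filter_le_eq_of_card_eq (s := univ) (g := (x · j)) hcard)

variable [Fintype σ]

def weightedL1 (b z : σ → ℝ) : ℝ := ∑ j, b j * |z j|

lemma weightedL1_sub_eq_dotProduct (b : σ → ℝ) {x y y₀ : σ → ℝ}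
    (h : ∀ j, x j ≤ y j ↔ x j ≤ y₀ j) :
    weightedL1 b (y - x) = (fun j => if x j ≤ y₀ j then b j else -b j) ⬝ᵥ (y - x) :=
  sum_congr rfl fun j _ => mul_abs_sub_eq_of_le_iff (b j) (h j)

lemma card_le_sum_choose_of_forall_cellIndex_eq (b : σ → ℝ) (x : ι → σ → ℝ) (r : ι → ℝ)
    (y₀ : σ → ℝ) {𝒜 : Finset (Finset ι)}
    (h𝒜 : ∀ S ∈ 𝒜, ∃ y, cellIndex x y = cellIndex x y₀ ∧
      ∀ i, weightedL1 b (y - x i) ≤ r i ↔ i ∈ S) :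
    #𝒜 ≤ ∑ d ∈ range (Fintype.card σ + 1), (Fintype.card ι).choose d := by
  classical
  let A : ι → σ → ℝ := fun i j => if x i j ≤ y₀ j then b j else -b j
  have := card_le_sum_choose_finrank_of_halfspaces (f := fun i => dotProductEquiv ℝ σ (A i))
    (c := fun i => r i + A i ⬝ᵥ x i) (𝒜 := 𝒜) fun S hS => ?_
  · simpa using this
  obtain ⟨y, hy, hyS⟩ := h𝒜 S hS
  refine ⟨y, fun i => ?_⟩
  rw [← hyS i, weightedL1_sub_eq_dotProduct b (le_iff_le_of_cellIndex_eq hy i), dotProduct_sub]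
  simp [A]

theorem PseudoShatters.two_pow_card_le {b : σ → ℝ} {x : ι → σ → ℝ} {r : ι → ℝ}
    (h : PseudoShatters (weightedL1 b) x r) :
    2 ^ Fintype.card ι ≤ (Fintype.card ι + 1) ^ Fintype.card σ *
      ∑ d ∈ range (Fintype.card σ + 1), (Fintype.card ι).choose d := by
  classical
  choose y hy using h
  set cells := (univ : Finset (Finset ι)).image fun S => cellIndex x (y S)
  have hfiber : ∀ v ∈ cells, #{S | cellIndex x (y S) = v} ≤
      ∑ d ∈ range (Fintype.card σ + 1), (Fintype.card ι).choose d := fun v hv => by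
    obtain ⟨S₀, -, rfl⟩ := mem_image.1 hv
    exact card_le_sum_choose_of_forall_cellIndex_eq b x r (y S₀) fun S hS =>
      ⟨y S, (mem_filter.1 hS).2, hy S⟩
  calc 2 ^ Fintype.card ι = #(univ : Finset (Finset ι)) := by simp
    _ ≤ (∑ d ∈ range (Fintype.card σ + 1), (Fintype.card ι).choose d) * #cells :=
      card_le_mul_card_image _ _ hfiber
    _ ≤ _ := by
      rw [mul_comm]
      gcongr
      exact (card_le_univ _).trans (by simp)

end WeightedL1

/-- A family is pseudo-shattered by weighted-ℓ1 balls (with witness radii `r`)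
iff its image under the scaling `φ(y)_j = b_j y_j` is ℓ1-pseudo-shattered with
the same radii; consequently any family pseudo-shattered by weighted-ℓ1 balls
satisfies the counting bound `2^k ≤ (k+1)^n · Σ_{i=0}^{n} C(k, i)`. -/
theorem weighted_l1_shattering_bound
    {n k : ℕ} (b : Fin n → ℝ) (hb : ∀ j, 0 < b j) (x : Fin k → Fin n → ℝ) :
    (∀ r : Fin k → ℝ,
      ((∀ S : Finset (Fin k), ∃ y : Fin n → ℝ,
          ∀ i : Fin k, (∑ j, b j * |y j - x i j| ≤ r i ↔ i ∈ S)) ↔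
       (∀ S : Finset (Fin k), ∃ y' : Fin n → ℝ,
          ∀ i : Fin k, (∑ j, |y' j - b j * x i j| ≤ r i ↔ i ∈ S)))) ∧
    ((∃ r : Fin k → ℝ, ∀ S : Finset (Fin k), ∃ y : Fin n → ℝ,
        ∀ i : Fin k, (∑ j, b j * |y j - x i j| ≤ r i ↔ i ∈ S)) →
      2 ^ k ≤ (k + 1) ^ n * ∑ i ∈ Finset.range (n + 1), k.choose i) := by
  let scale : (Fin n → ℝ) ≃+ (Fin n → ℝ) :=
    (LinearEquiv.piCongrRight fun j => LinearEquiv.smulOfNeZero ℝ ℝ (b j) (hb j).ne').toAddEquiv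
  have hscale : ∀ z, ∑ j, |scale z j| = weightedL1 b z := fun z => by
    simp [scale, weightedL1, abs_mul, abs_of_pos (hb _)]
  refine ⟨fun r => ?_, fun ⟨r, hr⟩ => ?_⟩
  · exact pseudoShatters_congr (N₁ := weightedL1 b) (N₂ := fun z => ∑ j, |z j|) scale hscale x r
  · simpa using PseudoShatters.two_pow_card_le (b := b) hr
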